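/- For every integer m ≥ 4 one has the ratio bounds θ_{m−1}/θ_{m−2} ≥ δ_{m−1} and δ_{m−1} > (((1−α)/(2α))·(m−3)) / ((m−1)/α − ((1−α)/(2α))(2α+1)), where in particular θ_{m−2} ≠ 0. -/

import Mathlib

/-- The sequence `θ_m`. -/
noncomputable def seqTheta (α : ℝ) : ℕ → ℝ
  | 0 => ((α + 1) / (2 * α)) ^ α
  | 1 => (α - 1) * (2 * α + 1) / (α + 1) * seqTheta α 0
  | (m + 2) =>
      2 * α / (((m : ℝ) + 2) * (1 + α)) *
        (((((m : ℝ) + 2) - 1) / α - (1 - α) / (2 * α) * (2 * α + 1)) * seqTheta α (m + 1) +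
          (1 - α) / (2 * α) * (3 - ((m : ℝ) + 2)) * seqTheta α m)

/-- `δ_m` from the paper. -/
noncomputable def deltaT (α : ℝ) (m : ℕ) : ℝ :=
  (1 - α) / (2 * α) * ((m : ℝ) - 2) /
      ((m : ℝ) / α - (1 - α) / (2 * α) * (2 * α + 1)) * (2 / (1 + α)) * (1 + 1 / (m : ℝ))

/-!
The ratios `r_m = θ_m / θ_{m-1}` satisfy `r_{m+1} = (E_m - (1-α)(m-2) / r_m) / ((1+α)(m+1))`,
with `E_m = 2m - (1-α)(2α+1)`. The right-hand side increases with `r_m`, so `r_m ≥ δ_m`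
propagates as soon as `δ_{m+1}` is at most its value at `r_m = δ_m`; clearing denominators, this
is a polynomial inequality in `m`. The induction starts at `m = 3`, where the `θ_1` term of the recurrence vanishes, and `θ_2 = -2α³(1-α) θ_0 / (1+α)² ≠ 0`.
The strict bound holds since `δ_m` is that fraction times `2/(1+α) > 1` and `1 + 1/m > 1`.
-/

section

variable {α : ℝ}

/-- `2α` times the denominator `x/α − ((1−α)/(2α))(2α+1)` of `δ_x`. -/
def dScaled (α x : ℝ) : ℝ := 2 * x - (1 - α) * (2 * α + 1)

lemma dScaled_pos {x : ℝ} (hx : 9 / 16 < x) : 0 < dScaled α x := by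
  unfold dScaled
  nlinarith [sq_nonneg (α - 1 / 4)]

lemma div_sub_eq_dScaled_div (hα : α ≠ 0) (x : ℝ) :
    x / α - (1 - α) / (2 * α) * (2 * α + 1) = dScaled α x / (2 * α) := by
  unfold dScaled
  field_simp

lemma deltaT_eq (hα : α ≠ 0) {m : ℕ} (hm : m ≠ 0) :
    deltaT α m = 2 * (1 - α) * (m - 2) * (m + 1) / ((1 + α) * m * dScaled α m) := by
  have hm' : (m : ℝ) ≠ 0 := Nat.cast_ne_zero.mpr hm
  rw [deltaT, div_sub_eq_dScaled_div hα]
  field_simp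

lemma deltaT_pos (h0 : 0 < α) (h1 : α < 1) {m : ℕ} (hm : 3 ≤ m) : 0 < deltaT α m := by
  have hm' : (3 : ℝ) ≤ m := by exact_mod_cast hm
  rw [deltaT_eq h0.ne' (by omega)]
  have hE := dScaled_pos (α := α) (x := m) (by linarith)
  have hnum : 0 < 2 * (1 - α) * (m - 2) * (m + 1) := by
    apply mul_pos (mul_pos (by linarith) (by linarith)) (by linarith)
  exact div_pos hnum (by positivity)

lemma lt_deltaT (h0 : 0 < α) (h1 : α < 1) {m : ℕ} (hm : 3 ≤ m) :
    (1 - α) / (2 * α) * ((m : ℝ) - 2) / ((m : ℝ) / α - (1 - α) / (2 * α) * (2 * α + 1))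
      < deltaT α m := by
  have hm' : (3 : ℝ) ≤ m := by exact_mod_cast hm
  have hbase : 0 < (1 - α) / (2 * α) * ((m : ℝ) - 2) /
      ((m : ℝ) / α - (1 - α) / (2 * α) * (2 * α + 1)) := by
    rw [div_sub_eq_dScaled_div h0.ne']
    have := dScaled_pos (α := α) (x := m) (by linarith)
    exact div_pos (mul_pos (div_pos (by linarith) (by linarith)) (by linarith)) (by positivity)
  have h2 : 1 < 2 / (1 + α) := by rw [one_lt_div (by linarith)]; linarith
  have h3 : 1 < 1 + 1 / (m : ℝ) := by simp only [lt_add_iff_pos_right]; positivity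
  rw [deltaT, mul_assoc]
  exact lt_mul_of_one_lt_right hbase (one_lt_mul_of_lt_of_le h2 h3.le)

/-- Expanded in `t = x - 3` the difference has nonnegative coefficients (the `t³` terms cancel). -/
lemma dScaled_mul_dScaled_ge (h0 : 0 < α) (h1 : α < 1) {x : ℝ} (hx : 3 ≤ x) :
    4 * (1 - α) * (x - 1) * (x + 1) * (x + 2)
      ≤ dScaled α x * dScaled α (x + 1) * ((1 - α) * x + 2) := by
  have hA : 0 < 15 - 5 * α + 161 * α ^ 2 - 95 * α ^ 3 + 32 * α ^ 4 - 12 * α ^ 5 := by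
    nlinarith [mul_pos (pow_pos h0 2) (by linarith : (0:ℝ) < 161 - 95 * α),
      mul_pos (pow_pos h0 4) (by linarith : (0:ℝ) < 32 - 12 * α)]
  have hB : 0 < 3 + 13 * α + 89 * α ^ 2 - 53 * α ^ 3 + 8 * α ^ 4 - 4 * α ^ 5 := by
    nlinarith [mul_pos (pow_pos h0 2) (by linarith : (0:ℝ) < 89 - 53 * α),
      mul_pos (pow_pos h0 4) (by linarith : (0:ℝ) < 8 - 4 * α)]
  have hC : 0 < 4 * α * (1 + 3 * α - 2 * α ^ 2) := by
    nlinarith [mul_pos h0 (by linarith : (0:ℝ) < 3 - 2 * α)]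
  have hexp : dScaled α x * dScaled α (x + 1) * ((1 - α) * x + 2)
      - 4 * (1 - α) * (x - 1) * (x + 1) * (x + 2)
      = (15 - 5 * α + 161 * α ^ 2 - 95 * α ^ 3 + 32 * α ^ 4 - 12 * α ^ 5)
        + (3 + 13 * α + 89 * α ^ 2 - 53 * α ^ 3 + 8 * α ^ 4 - 4 * α ^ 5) * (x - 3)
        + 4 * α * (1 + 3 * α - 2 * α ^ 2) * (x - 3) ^ 2 := by
    unfold dScaled; ring
  nlinarith [mul_nonneg hB.le (sub_nonneg.mpr hx), mul_nonneg hC.le (sq_nonneg (x - 3))]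

lemma deltaT_succ_le (h0 : 0 < α) (h1 : α < 1) {m : ℕ} (hm : 3 ≤ m) :
    deltaT α (m + 1) ≤ (dScaled α m - (1 - α) * (m - 2) / deltaT α m) / ((1 + α) * (m + 1)) := by
  have hm' : (3 : ℝ) ≤ m := by exact_mod_cast hm
  have hE := dScaled_pos (α := α) (x := m) (by linarith)
  have hE' := dScaled_pos (α := α) (x := m + 1) (by linarith)
  have hm2 : (m : ℝ) - 2 ≠ 0 := by linarith
  have h1' : 1 - α ≠ 0 := by linarith
  have hrhs : (dScaled α m - (1 - α) * (m - 2) / deltaT α m) / ((1 + α) * (m + 1))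
      = dScaled α m * ((1 - α) * m + 2) / (2 * (1 + α) * (m + 1) ^ 2) := by
    rw [deltaT_eq h0.ne' (by omega)]
    field_simp
    ring
  rw [hrhs, deltaT_eq h0.ne' (by omega), div_le_div_iff₀ (by push_cast; positivity) (by positivity)]
  push_cast
  nlinarith [mul_le_mul_of_nonneg_right (dScaled_mul_dScaled_ge h0 h1 hm')
    (by positivity : (0 : ℝ) ≤ (1 + α) * (m + 1))]

lemma seqTheta_succ_div (hα : α ≠ 0) {m : ℕ} (hm : 1 ≤ m) (hθ : seqTheta α m ≠ 0) :
    seqTheta α (m + 1) / seqTheta α m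
      = (dScaled α m - (1 - α) * (m - 2) / (seqTheta α m / seqTheta α (m - 1)))
          / ((1 + α) * (m + 1)) := by
  obtain ⟨n, rfl⟩ := Nat.exists_eq_add_of_le' hm
  rw [div_div_eq_mul_div, Nat.add_sub_cancel, seqTheta.eq_3, dScaled]
  push_cast
  field_simp
  ring

lemma seqTheta_two (h0 : 0 < α) :
    seqTheta α 2 = -(2 * α ^ 3 * (1 - α) / (1 + α) ^ 2) * seqTheta α 0 := by
  rw [seqTheta.eq_3, seqTheta.eq_2]
  field_simp
  ring

lemma seqTheta_two_ne_zero (h0 : 0 < α) (h1 : α < 1) : seqTheta α 2 ≠ 0 := by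
  have hθ0 : 0 < seqTheta α 0 := by
    rw [seqTheta.eq_1]
    exact Real.rpow_pos_of_pos (by positivity) α
  have hc : 0 < 2 * α ^ 3 * (1 - α) / (1 + α) ^ 2 := by
    have := sub_pos.mpr h1
    positivity
  rw [seqTheta_two h0]
  exact mul_ne_zero (neg_ne_zero.mpr hc.ne') hθ0.ne'

lemma deltaT_three_le (h0 : 0 < α) (h1 : α < 1) :
    deltaT α 3 ≤ seqTheta α 3 / seqTheta α 2 := by
  rw [seqTheta_succ_div h0.ne' (by norm_num) (seqTheta_two_ne_zero h0 h1),
    deltaT_eq h0.ne' (by norm_num)]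
  have hE3 := dScaled_pos (α := α) (x := 3) (by norm_num)
  have hprod : 8 * (1 - α) ≤ dScaled α 2 * dScaled α 3 := by
    unfold dScaled
    nlinarith [sq_nonneg (α - 1 / 4), mul_nonneg (sq_nonneg (α - 1 / 4)) (sq_nonneg (α - 1 / 4))]
  norm_num
  rw [div_le_div_iff₀ (by positivity) (by positivity)]
  nlinarith [mul_le_mul_of_nonneg_right hprod (by positivity : (0 : ℝ) ≤ 3 * (1 + α))]

lemma seqTheta_pred_ne_zero_and_deltaT_le (h0 : 0 < α) (h1 : α < 1) {m : ℕ} (hm : 3 ≤ m) :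
    seqTheta α (m - 1) ≠ 0 ∧ deltaT α m ≤ seqTheta α m / seqTheta α (m - 1) := by
  induction m, hm using Nat.le_induction with
  | base => exact ⟨seqTheta_two_ne_zero h0 h1, deltaT_three_le h0 h1⟩
  | succ m hm ih =>
    obtain ⟨-, hle⟩ := ih
    have hδ := deltaT_pos h0 h1 hm
    have hθ : seqTheta α m ≠ 0 := (div_ne_zero_iff.mp (hδ.trans_le hle).ne').1
    have hm' : (3 : ℝ) ≤ m := by exact_mod_cast hm
    rw [Nat.add_sub_cancel]
    refine ⟨hθ, ?_⟩
    rw [seqTheta_succ_div h0.ne' (by omega) hθ]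
    calc deltaT α (m + 1)
        ≤ (dScaled α m - (1 - α) * (m - 2) / deltaT α m) / ((1 + α) * (m + 1)) :=
          deltaT_succ_le h0 h1 hm
      _ ≤ _ := by
          gcongr
          exact mul_nonneg (by linarith) (by linarith)

end

theorem seqTheta_ratio_bounds (α : ℝ) (hα : α ∈ Set.Ioo (0 : ℝ) 1) :
    ∀ m : ℕ, 4 ≤ m →
      seqTheta α (m - 2) ≠ 0 ∧
      deltaT α (m - 1) ≤ seqTheta α (m - 1) / seqTheta α (m - 2) ∧
      (1 - α) / (2 * α) * ((m : ℝ) - 3) /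
          (((m : ℝ) - 1) / α - (1 - α) / (2 * α) * (2 * α + 1)) < deltaT α (m - 1) := by
  obtain ⟨h0, h1⟩ := hα
  intro m hm
  have hm1 : 3 ≤ m - 1 := by omega
  have hsub : m - 1 - 1 = m - 2 := by omega
  have hcast : ((m - 1 : ℕ) : ℝ) = m - 1 := by rw [Nat.cast_sub (by omega), Nat.cast_one]
  obtain ⟨hne, hle⟩ := seqTheta_pred_ne_zero_and_deltaT_le h0 h1 hm1
  rw [hsub] at hne hle
  refine ⟨hne, hle, ?_⟩
  have hlt := lt_deltaT h0 h1 hm1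
  rwa [hcast, show (m : ℝ) - 1 - 2 = m - 3 by ring] at hlt
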